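/- arXiv:1910.09389 — 2 statements merged into one kernel-verified Lean document; each statement's English description precedes it below -/
import Mathlib

section
/- The discrete Bochner transform $D$ restricts to a homeomorphism of $S^p_{ap}(\mathbb{R},X)$ onto $AP(\mathbb{Z}, L^p(0,1;X))$; in particular, if $u \in BS^p(\mathbb{R},X)$ and the sequence $(u^b(n))_{n\in\mathbb{Z}}$ is almost periodic in $L^p(0,1;X)$, then $u^b$ is Bohr almost periodic from $\mathbb{R}$ to $L^p(0,1;X)$. -/
open MeasureTheory Set Filter Topology
open scoped ENNReal

variable {X : Type*} [NormedAddCommGroup X]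

/-- The `L^p(0,1;X)`-norm of the Bochner transform `u^b(t)`, raised to the power `p`:
`‖u^b(t)‖_{L^p}^p = ∫_0^1 ‖u(t+θ)‖^p dθ`. -/
noncomputable def SIntegral (p : ℝ) (u : ℝ → X) (t : ℝ) : ℝ :=
  ∫ θ in Ioo (0:ℝ) 1, ‖u (t + θ)‖ ^ p

/-- The Stepanov norm `‖u‖_{S^p} = sup_t ‖u^b(t)‖_{L^p}`. -/
noncomputable def SNorm (p : ℝ) (u : ℝ → X) : ℝ :=
  ⨆ t : ℝ, (SIntegral p u t) ^ (1 / p)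

/-- `u ∈ L^p_loc(ℝ,X)`. -/
def MemLploc (p : ℝ) (u : ℝ → X) : Prop :=
  AEStronglyMeasurable u volume ∧ LocallyIntegrable (fun t => ‖u t‖ ^ p) volume

/-- `u ∈ BS^p(ℝ,X)`: Stepanov bounded functions. -/
def MemBSp (p : ℝ) (u : ℝ → X) : Prop :=
  MemLploc p u ∧ BddAbove (Set.range (SIntegral p u))

/-- `u ∈ S^p_{aa}(ℝ,X)`: the Bochner transform `u^b` is almost automorphic with values in
`L^p(0,1;X)`; convergence in `L^p(0,1;X)` is expressed via the integrals
`∫_0^1 ‖u(t+s_k+θ) - v(t)(θ)‖^p dθ → 0`. -/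
def StepanovAA (p : ℝ) (u : ℝ → X) : Prop :=
  MemLploc p u ∧
  ∀ s : ℕ → ℝ, ∃ φ : ℕ → ℕ, StrictMono φ ∧ ∃ v : ℝ → ℝ → X,
    (∀ t : ℝ, Tendsto (fun k => ∫ θ in Ioo (0:ℝ) 1, ‖u (t + s (φ k) + θ) - v t θ‖ ^ p)
      atTop (𝓝 0)) ∧
    (∀ t : ℝ, Tendsto (fun k => ∫ θ in Ioo (0:ℝ) 1, ‖v (t - s (φ k)) θ - u (t + θ)‖ ^ p)
      atTop (𝓝 0))

/-- `u ∈ S^p_{ap}(ℝ,X)`: the Bochner transform `u^b` is Bohr almost periodic with values in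
`L^p(0,1;X)`. -/
def StepanovAP (p : ℝ) (u : ℝ → X) : Prop :=
  MemLploc p u ∧
  ∀ ε > (0:ℝ), ∃ ℓ > (0:ℝ), ∀ α : ℝ, ∃ τ ∈ Icc α (α + ℓ),
    ∀ t : ℝ, (∫ θ in Ioo (0:ℝ) 1, ‖u (t + τ + θ) - u (t + θ)‖ ^ p) ≤ ε ^ p

/-- A family `H ⊂ L^p_loc(ℝ,X)` is Stepanov tight. -/
def StepanovTight (H : Set (ℝ → X)) : Prop :=
  ∀ ε > (0:ℝ), ∃ K : Set X, IsCompact K ∧ ∀ u ∈ H, ∀ t : ℝ,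
    volume {s ∈ Ioo t (t + 1) | u s ∉ K} < ENNReal.ofReal ε

/-- A family `H ⊂ L^p_loc(ℝ,X)` is Stepanov `p`-uniformly integrable. -/
def StepanovUI (p : ℝ) (H : Set (ℝ → X)) : Prop :=
  ∀ ε > (0:ℝ), ∃ δ > (0:ℝ), ∀ u ∈ H, ∀ t : ℝ, ∀ E : Set ℝ, MeasurableSet E →
    E ⊆ Ioo t (t + 1) → volume E ≤ ENNReal.ofReal δ →
    (∫ s in E, ‖u s‖ ^ p) ≤ ε

/-- Bohr almost periodic functions `AP(ℝ,E)`. -/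
def IsAlmostPeriodic {E : Type*} [NormedAddCommGroup E] (v : ℝ → E) : Prop :=
  Continuous v ∧ ∀ ε > (0:ℝ), ∃ ℓ > (0:ℝ), ∀ α : ℝ, ∃ τ ∈ Icc α (α + ℓ),
    ∀ t : ℝ, ‖v (t + τ) - v t‖ ≤ ε

/-- Almost automorphic functions `AA(ℝ,E)`. -/
def IsAlmostAutomorphic {E : Type*} [NormedAddCommGroup E] (v : ℝ → E) : Prop :=
  Continuous v ∧ ∀ s : ℕ → ℝ, ∃ φ : ℕ → ℕ, StrictMono φ ∧ ∃ w : ℝ → E,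
    (∀ t : ℝ, Tendsto (fun k => v (t + s (φ k))) atTop (𝓝 (w t))) ∧
    (∀ t : ℝ, Tendsto (fun k => w (t - s (φ k))) atTop (𝓝 (v t)))

/-!
A window `[t, t + 1]` is covered by the two integer windows `[n, n + 1]` and `[n + 1, n + 2]`,
`n = ⌊t⌋`. Hence an integer `ε/2`-almost period `τ` of the sequence `(u^b(n))` satisfies
`∫_t^{t+1} ‖u(s + τ) - u(s)‖^p ds ≤ 2 (ε/2)^p ≤ ε^p` for every real `t`, and integer almost
periods `τ ∈ [⌈α⌉, ⌈α⌉ + N]` are relatively dense in `ℝ` with length `N + 1`.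
-/

lemma norm_sub_rpow_le {E : Type*} [SeminormedAddCommGroup E] {p : ℝ} (hp : 0 ≤ p) (a b : E) :
    ‖a - b‖ ^ p ≤ 2 ^ p * (‖a‖ ^ p + ‖b‖ ^ p) := by
  have hmax : max ‖a‖ ‖b‖ ^ p ≤ ‖a‖ ^ p + ‖b‖ ^ p := by
    rcases le_total ‖a‖ ‖b‖ with h | h
    · rw [max_eq_right h]
      exact le_add_of_nonneg_left (by positivity)
    · rw [max_eq_left h]
      exact le_add_of_nonneg_right (by positivity)
  calc ‖a - b‖ ^ p ≤ (2 * max ‖a‖ ‖b‖) ^ p := by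
        gcongr
        linarith [norm_sub_le a b, le_max_left ‖a‖ ‖b‖, le_max_right ‖a‖ ‖b‖]
    _ = 2 ^ p * max ‖a‖ ‖b‖ ^ p := Real.mul_rpow zero_le_two (by positivity)
    _ ≤ 2 ^ p * (‖a‖ ^ p + ‖b‖ ^ p) := by gcongr

namespace MemLploc

variable {p : ℝ} {u v : ℝ → X}

lemma comp_add_right (hu : MemLploc p u) (τ : ℝ) : MemLploc p (fun s => u (s + τ)) := by
  have hτ := measurePreserving_add_right volume τ
  refine ⟨hu.1.comp_quasiMeasurePreserving hτ.quasiMeasurePreserving, ?_⟩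
  have := hu.2
  rw [← hτ.map_eq] at this
  exact (locallyIntegrable_map_homeomorph (Homeomorph.addRight τ)).1 this

lemma sub (hu : MemLploc p u) (hv : MemLploc p v) (hp : 0 ≤ p) :
    MemLploc p (fun s => u s - v s) := by
  have hmeas := hu.1.sub hv.1
  refine ⟨hmeas, ((hu.2.add hv.2).smul ((2 : ℝ) ^ p)).mono
    ((Real.continuous_rpow_const hp).comp_aestronglyMeasurable hmeas.norm)
    (Eventually.of_forall fun s => ?_)⟩
  simp only [Pi.smul_apply, Pi.add_apply, smul_eq_mul]
  rw [Real.norm_of_nonneg (by positivity), Real.norm_of_nonneg (by positivity)]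
  exact norm_sub_rpow_le hp (u s) (v s)

end MemLploc

lemma setIntegral_Ioo_zero_one_comp_add {E : Type*} [NormedAddCommGroup E] [NormedSpace ℝ E]
    (g : ℝ → E) (c : ℝ) : ∫ θ in Ioo (0 : ℝ) 1, g (c + θ) = ∫ s in c..c + 1, g s := by
  rw [← integral_Ioc_eq_integral_Ioo, ← intervalIntegral.integral_of_le zero_le_one,
    intervalIntegral.integral_comp_add_left g c, add_zero]

lemma setIntegral_Ioo_zero_one_norm_translate_sub_rpow (p : ℝ) (u : ℝ → X) (τ c : ℝ) :
    ∫ θ in Ioo (0 : ℝ) 1, ‖u (c + τ + θ) - u (c + θ)‖ ^ p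
      = ∫ s in c..c + 1, ‖u (s + τ) - u s‖ ^ p := by
  simp_rw [add_right_comm c τ]
  exact setIntegral_Ioo_zero_one_comp_add (fun s => ‖u (s + τ) - u s‖ ^ p) c

lemma intervalIntegral_unit_le_of_forall_int {f : ℝ → ℝ} (hf : LocallyIntegrable f)
    (hf₀ : 0 ≤ f) {C : ℝ} (hC : ∀ n : ℤ, ∫ s in (n : ℝ)..n + 1, f s ≤ C) (t : ℝ) :
    ∫ s in t..t + 1, f s ≤ 2 * C := by
  set n := ⌊t⌋
  have hI : ∀ a b : ℝ, IntervalIntegrable f volume a b := fun a b =>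
    (hf.integrableOn_isCompact isCompact_uIcc).intervalIntegrable
  have hnext : ∫ s in (n : ℝ) + 1..n + 2, f s ≤ C := by
    have := hC (n + 1)
    push_cast at this
    rwa [add_assoc (n : ℝ) 1 1, one_add_one_eq_two] at this
  calc ∫ s in t..t + 1, f s ≤ ∫ s in (n : ℝ)..n + 2, f s :=
        intervalIntegral.integral_mono_interval (Int.floor_le t) (by linarith)
          (by linarith [Int.lt_floor_add_one t]) (Eventually.of_forall hf₀) (hI _ _)
    _ = (∫ s in (n : ℝ)..n + 1, f s) + ∫ s in (n : ℝ) + 1..n + 2, f s :=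
        (intervalIntegral.integral_add_adjacent_intervals (hI _ _) (hI _ _)).symm
    _ ≤ 2 * C := by linarith [hC n]

/-- If `u ∈ BS^p(ℝ,X)` and the sequence `(u^b(n))_{n∈ℤ}` is almost periodic in `L^p(0,1;X)`,
then `u^b` is Bohr almost periodic from `ℝ` into `L^p(0,1;X)`, i.e. `u ∈ S^p_{ap}(ℝ,X)`.
(The `L^p(0,1;X)` distance between `u^b(t₁)` and `u^b(t₂)` is expressed by the integral
`(∫_0^1 ‖u(t₁+θ)-u(t₂+θ)‖^p dθ)^{1/p}`.) -/
theorem stmt_4 (p : ℝ) (hp : 1 ≤ p) (u : ℝ → X) (hu : MemBSp p u)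
    (hAPseq : ∀ ε > (0:ℝ), ∃ N : ℕ, 0 < N ∧ ∀ m : ℤ, ∃ τ : ℤ, m ≤ τ ∧ τ ≤ m + N ∧
      ∀ n : ℤ, (∫ θ in Ioo (0:ℝ) 1, ‖u ((n : ℝ) + (τ : ℝ) + θ) - u ((n : ℝ) + θ)‖ ^ p)
        ≤ ε ^ p) :
    StepanovAP p u := by
  refine ⟨hu.1, fun ε hε => ?_⟩
  obtain ⟨N, -, hN⟩ := hAPseq (ε / 2) (half_pos hε)
  refine ⟨N + 1, by positivity, fun α => ?_⟩
  obtain ⟨τ, hατ, hτN, hτ⟩ := hN ⌈α⌉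
  refine ⟨τ, ⟨(Int.le_ceil α).trans (by exact_mod_cast hατ), ?_⟩, fun t => ?_⟩
  · have : (τ : ℝ) ≤ ⌈α⌉ + N := by exact_mod_cast hτN
    linarith [Int.ceil_lt_add_one α]
  have hloc := ((hu.1.comp_add_right τ).sub hu.1 (by linarith)).2
  have hhalf : (ε / 2) ^ p + (ε / 2) ^ p ≤ ε ^ p := by
    simpa using Real.add_rpow_le_rpow_add (half_pos hε).le (half_pos hε).le hp
  rw [setIntegral_Ioo_zero_one_norm_translate_sub_rpow]
  calc _ ≤ 2 * (ε / 2) ^ p :=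
        intervalIntegral_unit_le_of_forall_int hloc (fun s => by positivity)
          (fun n => setIntegral_Ioo_zero_one_norm_translate_sub_rpow p u τ n ▸ hτ n) t
    _ ≤ ε ^ p := by linarith
end

section
/- Suppose $f:\mathbb{R}\times X\to Y$ satisfies: there exist $p,q,r\ge 1$ with $1/q = 1/p + 1/r$ and $L\in BS^r(\mathbb{R})$ with $\|f(t,x_1)-f(t,x_2)\|\le L(t)\|x_1-x_2\|$ for all $x_1,x_2\in X$ and a.e. $t$, and $f(\cdot,0)\in BS^q(\mathbb{R},Y)$ while $f(\cdot,u(\cdot))$ is strongly measurable on bounded intervals for each $u\in BS^p(\mathbb{R},X)$. Then the Nemytskii operator $\mathcal{N}_f(u)(t) = f(t,u(t))$ maps $BS^p(\mathbb{R},X)$ into $BS^q(\mathbb{R},Y)$ and is Lipschitzian with constant $\|L\|_{S^r}$: $\|\mathcal{N}_f(u)-\mathcal{N}_f(v)\|_{S^q} \le \|L\|_{S^r}\|u-v\|_{S^p}$. -/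
open MeasureTheory Set Filter Topology
open scoped ENNReal

variable {X : Type*} [NormedAddCommGroup X]

/-! Almost everywhere, `‖f(s, u s) - f(s, v s)‖ ≤ |L s| ‖u s - v s‖`. On each window
`(t, t + 1)`, Hölder's inequality with the conjugate exponents `r/q` and `p/q` gives
`∫ (|L| ‖w‖)^q ≤ (∫ |L|^r)^(q/r) (∫ ‖w‖^p)^(q/p)`; taking `q`-th roots and the supremum over `t`
yields the Lipschitz bound. Membership in `BS^q` follows from
`f(·, u) = f(·, 0) + (f(·, u) - f(·, 0))`, since `BS^q` is stable under a.e. domination by a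
sum of two `BS^q` functions, and the second summand is dominated by `|L| ‖u‖`. -/

lemma Real.add_rpow_le_two_rpow_mul_rpow_add_rpow {a b p : ℝ} (ha : 0 ≤ a) (hb : 0 ≤ b)
    (hp : 0 ≤ p) : (a + b) ^ p ≤ 2 ^ p * (a ^ p + b ^ p) := calc
  (a + b) ^ p ≤ (2 * max a b) ^ p := by rw [two_mul]; gcongr <;> simp
  _ = 2 ^ p * (max a b) ^ p := Real.mul_rpow zero_le_two (le_max_of_le_left ha)
  _ ≤ 2 ^ p * (a ^ p + b ^ p) := by
    gcongr
    rcases max_choice a b with h | h <;> rw [h] <;> simp [Real.rpow_nonneg, ha, hb]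

section Holder

variable {α E F : Type*} [MeasurableSpace α] {μ : Measure α}
  [NormedAddCommGroup E] [NormedAddCommGroup F]

lemma memLp_rpow_norm_of_integrable {A : α → E} {s t : ℝ} (hs : 0 < s) (ht : 0 < t)
    (hA : AEStronglyMeasurable A μ) (hi : Integrable (fun x => ‖A x‖ ^ t) μ) :
    MemLp (fun x => ‖A x‖ ^ s) (ENNReal.ofReal (t / s)) μ := by
  have hm : AEStronglyMeasurable (fun x => ‖A x‖ ^ s) μ :=
    (hA.norm.aemeasurable.pow_const s).aestronglyMeasurable
  rw [← integrable_norm_rpow_iff hm (by simp; positivity) ENNReal.ofReal_ne_top,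
    ENNReal.toReal_ofReal (by positivity)]
  refine hi.congr (ae_of_all _ fun x => ?_)
  dsimp only
  rw [Real.norm_of_nonneg (by positivity), ← Real.rpow_mul (norm_nonneg _),
    mul_div_cancel₀ _ hs.ne']

lemma integral_mul_rpow_le {p q r : ℝ} (hp : 0 < p) (hr : 0 < r)
    (hpqr : 1 / q = 1 / p + 1 / r) {A : α → E} {B : α → F}
    (hA : AEStronglyMeasurable A μ) (hAi : Integrable (fun x => ‖A x‖ ^ r) μ)
    (hB : AEStronglyMeasurable B μ) (hBi : Integrable (fun x => ‖B x‖ ^ p) μ) :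
    Integrable (fun x => (‖A x‖ * ‖B x‖) ^ q) μ ∧
      ∫ x, (‖A x‖ * ‖B x‖) ^ q ∂μ ≤
        (∫ x, ‖A x‖ ^ r ∂μ) ^ (q / r) * (∫ x, ‖B x‖ ^ p ∂μ) ^ (q / p) := by
  have hq : 0 < q := one_div_pos.mp (by rw [hpqr]; positivity)
  have hconj : (r / q).HolderConjugate (p / q) := by
    refine Real.holderConjugate_iff.2 ⟨?_, ?_⟩
    · rw [one_lt_div hq, ← one_div_lt_one_div hr hq, hpqr]
      linarith [one_div_pos.2 hp]
    · calc (r / q)⁻¹ + (p / q)⁻¹ = q * (1 / p + 1 / r) := by field_simp; ring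
        _ = 1 := by rw [← hpqr]; field_simp
  have hAq := memLp_rpow_norm_of_integrable hq hr hA hAi
  have hBq := memLp_rpow_norm_of_integrable hq hp hB hBi
  have hmul : ∀ x, (‖A x‖ * ‖B x‖) ^ q = ‖A x‖ ^ q * ‖B x‖ ^ q := fun x =>
    Real.mul_rpow (norm_nonneg _) (norm_nonneg _)
  have : ENNReal.HolderTriple (ENNReal.ofReal (r / q)) (ENNReal.ofReal (p / q)) 1 :=
    ⟨by simpa using hconj.inv_add_inv_ennreal⟩
  refine ⟨(hAq.integrable_mul hBq).congr (ae_of_all _ fun x => (hmul x).symm), ?_⟩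
  have hHolder := integral_mul_le_Lp_mul_Lq_of_nonneg hconj
    (ae_of_all _ fun x => by positivity) (ae_of_all _ fun x => by positivity) hAq hBq
  have hpow : ∀ (a s : ℝ), 0 ≤ a → (a ^ q) ^ (s / q) = a ^ s := fun a s ha => by
    rw [← Real.rpow_mul ha, mul_div_cancel₀ _ hq.ne']
  simpa only [hmul, hpow _ _ (norm_nonneg _), one_div_div] using hHolder

end Holder

section Stepanov

variable {E F H : Type*} [NormedAddCommGroup E] [NormedAddCommGroup F] [NormedAddCommGroup H]

lemma SIntegral_eq_setIntegral (p : ℝ) (u : ℝ → E) (t : ℝ) :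
    SIntegral p u t = ∫ s in Ioo t (t + 1), ‖u s‖ ^ p := by
  rw [SIntegral, ← integral_Ioc_eq_integral_Ioo, ← integral_Ioc_eq_integral_Ioo,
    ← intervalIntegral.integral_of_le zero_le_one,
    ← intervalIntegral.integral_of_le (by linarith),
    intervalIntegral.integral_comp_add_left (fun s => ‖u s‖ ^ p), add_zero]

lemma SIntegral_nonneg (p : ℝ) (u : ℝ → E) (t : ℝ) : 0 ≤ SIntegral p u t :=
  integral_nonneg fun _ => by positivity

lemma SNorm_nonneg (p : ℝ) (u : ℝ → E) : 0 ≤ SNorm p u :=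
  Real.iSup_nonneg fun t => Real.rpow_nonneg (SIntegral_nonneg p u t) _

lemma rpow_SIntegral_le_SNorm {p : ℝ} (hp : 0 ≤ p) {u : ℝ → E}
    (hu : BddAbove (range (SIntegral p u))) (t : ℝ) :
    SIntegral p u t ^ (1 / p) ≤ SNorm p u := by
  obtain ⟨M, hM⟩ := hu
  refine le_ciSup (f := fun s => SIntegral p u s ^ (1 / p)) ⟨M ^ (1 / p), ?_⟩ t
  rintro _ ⟨s, rfl⟩
  exact Real.rpow_le_rpow (SIntegral_nonneg p u s) (hM ⟨s, rfl⟩) (by positivity)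

lemma MemLploc.integrableOn_Ioo {p : ℝ} {u : ℝ → E} (hu : MemLploc p u) (a b : ℝ) :
    IntegrableOn (fun s => ‖u s‖ ^ p) (Ioo a b) :=
  (hu.2.integrableOn_isCompact isCompact_Icc).mono_set Ioo_subset_Icc_self

lemma SIntegral_le_setIntegral {p t : ℝ} {G : ℝ → E} {g : ℝ → ℝ}
    (hg : IntegrableOn g (Ioo t (t + 1))) (hGg : ∀ᵐ s, ‖G s‖ ^ p ≤ g s) :
    SIntegral p G t ≤ ∫ s in Ioo t (t + 1), g s := by
  rw [SIntegral_eq_setIntegral]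
  exact integral_mono_of_nonneg (ae_of_all _ fun _ => by positivity) hg (ae_restrict_of_ae hGg)

lemma memBSp_of_rpow_norm_le {p : ℝ} {G : ℝ → E} {g : ℝ → ℝ}
    (hG : AEStronglyMeasurable G) (hg : ∀ t, IntegrableOn g (Ioo t (t + 1)))
    (hGg : ∀ᵐ s, ‖G s‖ ^ p ≤ g s) (hbdd : BddAbove (range fun t => ∫ s in Ioo t (t + 1), g s)) :
    MemBSp p G := by
  have hGp : AEStronglyMeasurable (fun s => ‖G s‖ ^ p) :=
    (hG.norm.aemeasurable.pow_const p).aestronglyMeasurable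
  refine ⟨⟨hG, fun x => ⟨Ioo (x - 2⁻¹) (x - 2⁻¹ + 1), Ioo_mem_nhds (by linarith) (by linarith),
    (hg _).mono' hGp.restrict (ae_restrict_of_ae (hGg.mono fun s hs => ?_))⟩⟩, ?_⟩
  · rwa [Real.norm_of_nonneg (by positivity)]
  · obtain ⟨C, hC⟩ := hbdd
    refine ⟨C, ?_⟩
    rintro _ ⟨t, rfl⟩
    exact (SIntegral_le_setIntegral (hg t) hGg).trans (hC ⟨t, rfl⟩)

lemma MemBSp.of_norm_le_add {p : ℝ} (hp : 0 ≤ p) {u : ℝ → F} {v : ℝ → H} {G : ℝ → E}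
    (hu : MemBSp p u) (hv : MemBSp p v) (hG : AEStronglyMeasurable G)
    (h : ∀ᵐ s, ‖G s‖ ≤ ‖u s‖ + ‖v s‖) : MemBSp p G := by
  obtain ⟨Mu, hMu⟩ := hu.2
  obtain ⟨Mv, hMv⟩ := hv.2
  refine memBSp_of_rpow_norm_le hG (g := fun s => 2 ^ p * (‖u s‖ ^ p + ‖v s‖ ^ p))
    (fun t => ((hu.1.integrableOn_Ioo _ _).add (hv.1.integrableOn_Ioo _ _)).const_mul _)
    (h.mono fun s hs => (Real.rpow_le_rpow (norm_nonneg _) hs hp).trans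
      (Real.add_rpow_le_two_rpow_mul_rpow_add_rpow (norm_nonneg _) (norm_nonneg _) hp))
    ⟨2 ^ p * (Mu + Mv), ?_⟩
  rintro _ ⟨t, rfl⟩
  dsimp only
  rw [integral_const_mul, integral_add (hu.1.integrableOn_Ioo _ _) (hv.1.integrableOn_Ioo _ _),
    ← SIntegral_eq_setIntegral, ← SIntegral_eq_setIntegral]
  gcongr
  exacts [hMu ⟨t, rfl⟩, hMv ⟨t, rfl⟩]

lemma MemBSp.sub {p : ℝ} (hp : 0 ≤ p) {u v : ℝ → E} (hu : MemBSp p u) (hv : MemBSp p v) :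
    MemBSp p (fun t => u t - v t) :=
  hu.of_norm_le_add hp hv (hu.1.1.sub hv.1.1) (ae_of_all _ fun _ => norm_sub_le _ _)

variable {p q r : ℝ}

lemma MemLploc.integrableOn_mul_rpow (hp : 0 < p) (hr : 0 < r) (hpqr : 1 / q = 1 / p + 1 / r)
    {L : ℝ → E} {w : ℝ → F} (hL : MemLploc r L) (hw : MemLploc p w) (t : ℝ) :
    IntegrableOn (fun s => (‖L s‖ * ‖w s‖) ^ q) (Ioo t (t + 1)) :=
  (integral_mul_rpow_le hp hr hpqr hL.1.restrict (hL.integrableOn_Ioo _ _) hw.1.restrict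
    (hw.integrableOn_Ioo _ _)).1

lemma MemLploc.setIntegral_mul_rpow_le (hp : 0 < p) (hr : 0 < r) (hpqr : 1 / q = 1 / p + 1 / r)
    {L : ℝ → E} {w : ℝ → F} (hL : MemLploc r L) (hw : MemLploc p w) (t : ℝ) :
    ∫ s in Ioo t (t + 1), (‖L s‖ * ‖w s‖) ^ q ≤
      SIntegral r L t ^ (q / r) * SIntegral p w t ^ (q / p) := by
  rw [SIntegral_eq_setIntegral, SIntegral_eq_setIntegral]
  exact (integral_mul_rpow_le hp hr hpqr hL.1.restrict (hL.integrableOn_Ioo _ _) hw.1.restrict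
    (hw.integrableOn_Ioo _ _)).2

lemma MemBSp.of_norm_le_mul (hp : 0 < p) (hr : 0 < r) (hpqr : 1 / q = 1 / p + 1 / r)
    {L : ℝ → E} {w : ℝ → F} {G : ℝ → H} (hL : MemBSp r L) (hw : MemBSp p w)
    (hG : AEStronglyMeasurable G) (h : ∀ᵐ s, ‖G s‖ ≤ ‖L s‖ * ‖w s‖) :
    MemBSp q G := by
  have hq : 0 < q := one_div_pos.mp (by rw [hpqr]; positivity)
  obtain ⟨ML, hML⟩ := hL.2
  obtain ⟨Mw, hMw⟩ := hw.2
  refine memBSp_of_rpow_norm_le hG (hL.1.integrableOn_mul_rpow hp hr hpqr hw.1)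
    (h.mono fun s hs => Real.rpow_le_rpow (norm_nonneg _) hs hq.le)
    ⟨ML ^ (q / r) * Mw ^ (q / p), ?_⟩
  rintro _ ⟨t, rfl⟩
  refine (hL.1.setIntegral_mul_rpow_le hp hr hpqr hw.1 t).trans ?_
  have := SIntegral_nonneg r L t
  have := SIntegral_nonneg p w t
  have : 0 ≤ ML := (SIntegral_nonneg r L 0).trans (hML ⟨0, rfl⟩)
  gcongr
  exacts [hML ⟨t, rfl⟩, hMw ⟨t, rfl⟩]

lemma SNorm_le_mul (hp : 0 < p) (hr : 0 < r) (hpqr : 1 / q = 1 / p + 1 / r)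
    {L : ℝ → E} {w : ℝ → F} {G : ℝ → H} (hL : MemBSp r L) (hw : MemBSp p w)
    (h : ∀ᵐ s, ‖G s‖ ≤ ‖L s‖ * ‖w s‖) : SNorm q G ≤ SNorm r L * SNorm p w := by
  have hq : 0 < q := one_div_pos.mp (by rw [hpqr]; positivity)
  refine Real.iSup_le (fun t => ?_) (mul_nonneg (SNorm_nonneg _ _) (SNorm_nonneg _ _))
  have hLt := SIntegral_nonneg r L t
  have hwt := SIntegral_nonneg p w t
  have := SIntegral_nonneg q G t
  have hGt : SIntegral q G t ≤ SIntegral r L t ^ (q / r) * SIntegral p w t ^ (q / p) :=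
    (SIntegral_le_setIntegral (hL.1.integrableOn_mul_rpow hp hr hpqr hw.1 t)
      (h.mono fun s hs => Real.rpow_le_rpow (norm_nonneg _) hs hq.le)).trans
      (hL.1.setIntegral_mul_rpow_le hp hr hpqr hw.1 t)
  calc SIntegral q G t ^ (1 / q)
      ≤ (SIntegral r L t ^ (q / r) * SIntegral p w t ^ (q / p)) ^ (1 / q) := by gcongr
    _ = SIntegral r L t ^ (1 / r) * SIntegral p w t ^ (1 / p) := by
      rw [Real.mul_rpow (by positivity) (by positivity), ← Real.rpow_mul hLt,
        ← Real.rpow_mul hwt]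
      congr 2 <;> field_simp
    _ ≤ SNorm r L * SNorm p w := by
      gcongr
      exacts [SNorm_nonneg _ _, rpow_SIntegral_le_SNorm hr.le hL.2 t,
        rpow_SIntegral_le_SNorm hp.le hw.2 t]

end Stepanov

/-- If `1/q = 1/p + 1/r`, `‖f(t,x₁)-f(t,x₂)‖ ≤ L(t)‖x₁-x₂‖` with `L ∈ BS^r(ℝ)`,
`f(·,0) ∈ BS^q(ℝ,Y)` and `f(·,u(·))` is strongly measurable for `u ∈ BS^p(ℝ,X)`, then
the Nemytskii operator `𝒩_f(u)(t) = f(t,u(t))` maps `BS^p(ℝ,X)` into `BS^q(ℝ,Y)` and is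
Lipschitzian with constant `‖L‖_{S^r}`. -/
theorem stmt_17 {Y : Type*} [NormedAddCommGroup Y] (p q r : ℝ)
    (hp : 1 ≤ p) (hq : 1 ≤ q) (hr : 1 ≤ r) (hpqr : 1 / q = 1 / p + 1 / r)
    (f : ℝ → X → Y) (L : ℝ → ℝ) (hL : MemBSp r L)
    (hlip : ∀ᵐ t : ℝ, ∀ x₁ x₂ : X, ‖f t x₁ - f t x₂‖ ≤ L t * ‖x₁ - x₂‖)
    (h0 : MemBSp q (fun t => f t 0))
    (hmeas : ∀ u : ℝ → X, MemBSp p u → AEStronglyMeasurable (fun t => f t (u t)) volume) :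
    (∀ u : ℝ → X, MemBSp p u → MemBSp q (fun t => f t (u t))) ∧
      ∀ u v : ℝ → X, MemBSp p u → MemBSp p v →
        SNorm q (fun t => f t (u t) - f t (v t)) ≤
          SNorm r L * SNorm p (fun t => u t - v t) := by
  have hp0 : 0 < p := by linarith
  have hr0 : 0 < r := by linarith
  have hdiff : ∀ u v : ℝ → X,
      ∀ᵐ s, ‖f s (u s) - f s (v s)‖ ≤ ‖L s‖ * ‖u s - v s‖ := fun u v =>
    hlip.mono fun s hs => (hs _ _).trans (by gcongr; exact Real.le_norm_self _)
  refine ⟨fun u hu => ?_, fun u v hu hv =>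
    SNorm_le_mul hp0 hr0 hpqr hL (hu.sub hp0.le hv) (hdiff u v)⟩
  have hLu : MemBSp q (fun s => f s (u s) - f s 0) :=
    hL.of_norm_le_mul hp0 hr0 hpqr hu ((hmeas u hu).sub h0.1.1) (by simpa using hdiff u 0)
  exact hLu.of_norm_le_add (by linarith) h0 (hmeas u hu)
    (ae_of_all _ fun s => norm_le_norm_sub_add _ _)
end
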